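/- Let α be a type, nds : α → ℝ, lat : α → ℝ, and latMax : ℝ. Suppose l : List α is sorted in non-increasing NDS order, i.e., l.Sorted (fun a b => nds b ≤ nds a). If l.find? (fun p => decide (lat p ≤ latMax)) = some p₀, then (i) p₀ ∈ l, (ii) lat p₀ ≤ latMax, and (iii) for every p ∈ l with lat p ≤ latMax one has nds p ≤ nds p₀. In other words, the first element of the list satisfying the latency bound maximizes the accuracy score nds among all elements of the list satisfying the bound. -/

import Mathlib

theorem List.Pairwise.rel_of_find?_eq_some {α : Type*} {R : α → α → Prop} (hR : ∀ x, R x x)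
    {p : α → Bool} {l : List α} {a : α} (hl : l.Pairwise R) (ha : l.find? p = some a) :
    ∀ b ∈ l, p b → R a b := by
  obtain ⟨-, as, bs, rfl, has⟩ := List.find?_eq_some_iff_append.mp ha
  intro b hb hpb
  rcases List.mem_append.mp hb with hb | hb
  · simpa [hpb] using has b hb
  · rcases List.mem_cons.mp hb with rfl | hb
    · exact hR b
    · exact (List.pairwise_cons.mp (List.pairwise_append.mp hl).2.1).1 b hb

/-- Feasible case of Theorem 1 (correctness of `optPar`): in a list sorted in
non-increasing NDS order, the first element satisfying the latency bound is
a member of the list, feasible, and maximizes `nds` among all feasible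
elements of the list. -/
theorem optPar_feasible_correct {α : Type*} (nds lat : α → ℝ) (latMax : ℝ)
    (l : List α) (hsorted : l.Pairwise (fun a b => nds b ≤ nds a)) (p₀ : α)
    (hfind : l.find? (fun p => decide (lat p ≤ latMax)) = some p₀) :
    p₀ ∈ l ∧ lat p₀ ≤ latMax ∧
      ∀ p ∈ l, lat p ≤ latMax → nds p ≤ nds p₀ := by
  refine ⟨List.mem_of_find?_eq_some hfind, by simpa using List.find?_some hfind, ?_⟩
  intro p hp hlat
  exact hsorted.rel_of_find?_eq_some (fun x => le_refl (nds x)) hfind p hp (decide_eq_true hlat)
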